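/- arXiv:2104.04193 — 9 statements merged into one kernel-verified Lean document; each statement's English description precedes it below -/
import Mathlib

section
/- Let m be a positive integer, n = 3^m - 1, and δ₁ = (3^m - 1)/2. Then δ₁ is the largest absolute coset leader: for every s ∈ Z_n with C_s ≠ C_{δ₁}, the absolute coset leader of C_s is strictly less than δ₁. -/
/-- The 3-cyclotomic coset of `s` modulo `n`. -/
def cyclotomicCoset (n s : ℕ) : Set ℕ := {k | ∃ j : ℕ, k = s * 3 ^ j % n}

/-- The absolute coset leader of the 3-cyclotomic coset of `s` modulo `n`. -/
noncomputable def absCosetLeader (n s : ℕ) : ℕ :=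
  sInf {t | ∃ k ∈ cyclotomicCoset n s, t = min k (n - k)}

theorem stmt2 (m : ℕ) (hm : 1 ≤ m) (s : ℕ) (hs : s < 3 ^ m - 1)
    (h : cyclotomicCoset (3 ^ m - 1) s ≠ cyclotomicCoset (3 ^ m - 1) ((3 ^ m - 1) / 2)) :
    absCosetLeader (3 ^ m - 1) s < (3 ^ m - 1) / 2 := by
  set n := 3 ^ m - 1 with hn
  have hsne : s ≠ n / 2 := by
    intro hsd
    exact h (by rw [hsd])
  have hodd : (3 : ℕ) ^ m % 2 = 1 := Nat.odd_iff.mp (Odd.pow ⟨1, rfl⟩)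
  have hmem : min s (n - s) ∈ {t | ∃ k ∈ cyclotomicCoset n s, t = min k (n - k)} := by
    refine ⟨s, ⟨0, ?_⟩, rfl⟩
    simp [Nat.mod_eq_of_lt hs]
  calc absCosetLeader n s ≤ min s (n - s) := Nat.sInf_le hmem
    _ < n / 2 := by omega
end

section
/- Let m ≥ 3 be odd, n = 3^m - 1, and δ₂ = (3^{m-1} - 1)/4 + 3^{m-2}. Then the 3-cyclotomic coset C_{δ₂} modulo n has exactly m elements. -/
/-!
Since `3^m ≡ 1` modulo `n = 3^m - 1`, the sequence `δ · 3^j mod n` has period `m`, so the coset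
of `δ` has exactly `m` elements unless `δ · 3^d ≡ δ` for some `0 < d < m`. As `m - 1` is even,
`4 ∣ 3^(m-1) - 1` and `108 δ + 6 = 21 n`; hence `n ∣ δ (3^d - 1)` would force
`n ∣ 6 (3^d - 1)`, and as `3 ∤ n` even `n ∣ 2 (3^d - 1)`, which is impossible because
`0 < 2 (3^d - 1) < n`.
-/

theorem Function.Periodic.ncard_range {α : Type*} {f : ℕ → α} {m : ℕ}
    (hf : Function.Periodic f m) (hm : 0 < m) (hinj : Set.InjOn f (Set.Iio m)) :
    (Set.range f).ncard = m := by
  have hrange : Set.range f = f '' Set.Iio m := by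
    refine Set.Subset.antisymm ?_ (Set.image_subset_range f _)
    rintro _ ⟨j, rfl⟩
    exact ⟨j % m, Nat.mod_lt j hm, hf.map_mod_nat j⟩
  rw [hrange, hinj.ncard_image, ← Finset.coe_range, Set.ncard_coe_finset, Finset.card_range]

theorem Nat.coprime_of_pow_modEq_one {a m n : ℕ} (hm : 0 < m) (h : a ^ m ≡ 1 [MOD n]) :
    a.Coprime n :=
  Nat.coprime_of_mul_modEq_one (a ^ (m - 1)) (by rw [← pow_succ']; convert h using 2; omega)

theorem ncard_cyclotomicCoset {n s m : ℕ} (hm : 0 < m) (h3m : 3 ^ m ≡ 1 [MOD n])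
    (hs : ∀ d, 0 < d → d < m → ¬ s * 3 ^ d ≡ s [MOD n]) :
    (cyclotomicCoset n s).ncard = m := by
  have hrange : cyclotomicCoset n s = Set.range (fun j => s * 3 ^ j % n) :=
    Set.ext fun _ => exists_congr fun _ => eq_comm
  rw [hrange]
  refine Function.Periodic.ncard_range (fun j => ?_) hm ?_
  · show s * 3 ^ (j + m) ≡ s * 3 ^ j [MOD n]
    simpa [pow_add, mul_assoc] using Nat.ModEq.mul_left (s * 3 ^ j) h3m
  · intro j hj k hk hjk
    by_contra hne
    wlog hlt : j < k generalizing j k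
    · exact this hk hj hjk.symm (Ne.symm hne) (by omega)
    obtain ⟨d, rfl⟩ := Nat.exists_eq_add_of_lt hlt
    refine hs (d + 1) d.succ_pos (by simp only [Set.mem_Iio] at hk; omega) ?_
    have hcop : Nat.gcd n (3 ^ j) = 1 := ((Nat.coprime_of_pow_modEq_one hm h3m).pow_left j).symm
    refine Nat.ModEq.cancel_right_of_coprime hcop ?_
    have : s * 3 ^ j ≡ s * 3 ^ (j + d + 1) [MOD n] := hjk
    rw [show j + d + 1 = d + 1 + j by ring, pow_add, ← mul_assoc] at this
    exact this.symm

theorem not_mul_three_pow_modEq_self {n s d : ℕ} (hsn : 108 * s + 6 = 21 * n)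
    (h3n : Nat.Coprime 3 n) (hd : 0 < d) (hdn : 2 * (3 ^ d - 1) < n) :
    ¬ s * 3 ^ d ≡ s [MOD n] := by
  intro h
  have hsx : n ∣ s * (3 ^ d - 1) := by
    rw [Nat.mul_sub_one]
    exact (Nat.modEq_iff_dvd' (Nat.le_mul_of_pos_right s (by positivity))).mp h.symm
  have h6x : n ∣ 3 * (2 * (3 ^ d - 1)) := by
    have : n ∣ 108 * (s * (3 ^ d - 1)) + 3 * (2 * (3 ^ d - 1)) :=
      ⟨21 * (3 ^ d - 1), by linear_combination (3 ^ d - 1) * hsn⟩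
    exact (Nat.dvd_add_right (hsx.mul_left 108)).mp this
  have h2x : 2 * (3 ^ d - 1) = 0 :=
    Nat.eq_zero_of_dvd_of_lt (h3n.symm.dvd_of_dvd_mul_left h6x) hdn
  have : 1 < 3 ^ d := Nat.one_lt_pow hd.ne' (by norm_num)
  omega

theorem four_dvd_three_pow_sub_one {k : ℕ} (hk : Even k) : 4 ∣ 3 ^ k - 1 := by
  obtain ⟨t, rfl⟩ := hk
  rw [← two_mul, pow_mul]
  simpa using (by norm_num : 4 ∣ 9 - 1).trans (Nat.sub_dvd_pow_sub_pow 9 1 t)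

def delta2 (m : ℕ) : ℕ := (3 ^ (m - 1) - 1) / 4 + 3 ^ (m - 2)

theorem delta2_mul_add {m : ℕ} (hm : 3 ≤ m) (hodd : Odd m) :
    108 * delta2 m + 6 = 21 * (3 ^ m - 1) := by
  have h4 : 4 ∣ 3 ^ (m - 1) - 1 :=
    four_dvd_three_pow_sub_one (by obtain ⟨t, rfl⟩ := hodd; exact ⟨t, by omega⟩)
  have h1 : 3 ^ (m - 1) = 3 * 3 ^ (m - 2) := by rw [← pow_succ']; congr 1; omega
  have h0 : 3 ^ m = 3 * 3 ^ (m - 1) := by rw [← pow_succ']; congr 1; omega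
  have hpos : 0 < 3 ^ (m - 2) := by positivity
  unfold delta2
  omega

theorem two_mul_three_pow_sub_one_lt {d m : ℕ} (hdm : d < m) : 2 * (3 ^ d - 1) < 3 ^ m - 1 := by
  have hd : 3 ^ d ≤ 3 ^ (m - 1) := Nat.pow_le_pow_right (by norm_num) (by omega)
  have hm : 3 ^ m = 3 * 3 ^ (m - 1) := by rw [← pow_succ']; congr 1; omega
  have : 0 < 3 ^ d := by positivity
  omega

theorem stmt3 (m : ℕ) (hm : 3 ≤ m) (hodd : Odd m) :
    (cyclotomicCoset (3 ^ m - 1) ((3 ^ (m - 1) - 1) / 4 + 3 ^ (m - 2))).ncard = m := by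
  have h3m : 3 ^ m ≡ 1 [MOD 3 ^ m - 1] := Nat.modEq_sub (Nat.one_le_pow _ _ (by norm_num))
  exact ncard_cyclotomicCoset (by omega) h3m fun d hd hdm =>
    not_mul_three_pow_modEq_self (delta2_mul_add hm hodd)
      (Nat.coprime_of_pow_modEq_one (by omega) h3m) hd (two_mul_three_pow_sub_one_lt hdm)
end

section
/- Let m ≥ 3 be odd, n = 3^m - 1, and δ₂ = (3^{m-1} - 1)/4 + 3^{m-2}. Then δ₂ is the smallest element of the set {min(k, n-k) : k ∈ C_{δ₂}}, i.e., δ₂ is the absolute coset leader of its own coset. -/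
theorem stmt4 (m : ℕ) (hm : 3 ≤ m) (hodd : Odd m) :
    absCosetLeader (3 ^ m - 1) ((3 ^ (m - 1) - 1) / 4 + 3 ^ (m - 2)) =
      (3 ^ (m - 1) - 1) / 4 + 3 ^ (m - 2) := by
  set a : ℕ := 3 ^ (m - 2) with ha_def
  set n : ℕ := 3 ^ m - 1 with hn_def
  set δ : ℕ := (3 ^ (m - 1) - 1) / 4 + 3 ^ (m - 2) with hδ_def
  have ha3 : 3 ≤ a := by
    calc (3:ℕ) = 3 ^ 1 := rfl
    _ ≤ 3 ^ (m - 2) := Nat.pow_le_pow_right (by norm_num) (by omega)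
  have hm1 : 3 ^ (m - 1) = 3 * a := by
    rw [ha_def, ← pow_succ']
    congr 1
    omega
  have hmm : (3:ℕ) ^ m = 9 * a := by
    have : (3:ℕ) ^ m = 3 ^ (m - 2) * 3 ^ 2 := by rw [← pow_add]; congr 1; omega
    rw [this, ha_def]; ring
  have hn : n + 1 = 9 * a := by
    rw [hn_def, hmm]; omega
  have hamod : a % 4 = 3 := by
    obtain ⟨t, ht⟩ := hodd
    have hc : m - 2 = 2 * (t - 1) + 1 := by omega
    have h9 : (9:ℕ) ^ (t - 1) % 4 = 1 := by
      rw [Nat.pow_mod]; norm_num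
    have : a = 3 * 9 ^ (t - 1) := by
      rw [ha_def, hc, pow_succ, pow_mul]; ring
    omega
  have h4δ : 4 * δ + 1 = 7 * a := by
    rw [hδ_def, hm1, ← ha_def]
    omega
  have hδn : δ < n := by omega
  -- key lower bound
  have key : ∀ j : ℕ, δ ≤ min (δ * 3 ^ j % n) (n - δ * 3 ^ j % n) := by
    intro j
    have hnpos : 2 ≤ n := by omega
    have h3m : (1:ℕ) ≡ 3 ^ m [MOD n] := by
      have h1 : (1:ℕ) ≤ 3 ^ m := Nat.one_le_pow _ _ (by norm_num)
      exact (Nat.modEq_iff_dvd' h1).mpr ⟨1, by omega⟩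
    have hmod : δ * 3 ^ j % n = δ * 3 ^ (j % m) % n := by
      have h1 : ((3:ℕ) ^ m) ^ (j / m) ≡ 1 ^ (j / m) [MOD n] := (h3m.symm).pow _
      have h2 : δ * ((3 ^ m) ^ (j / m) * 3 ^ (j % m)) ≡ δ * (1 ^ (j / m) * 3 ^ (j % m)) [MOD n] :=
        (h1.mul_right _).mul_left _
      calc δ * 3 ^ j % n = δ * ((3 ^ m) ^ (j / m) * 3 ^ (j % m)) % n := by
            rw [← pow_mul, ← pow_add, Nat.div_add_mod]
        _ = δ * (1 ^ (j / m) * 3 ^ (j % m)) % n := h2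
        _ = δ * 3 ^ (j % m) % n := by rw [one_pow, one_mul]
    rw [hmod]
    have hj' : j % m < m := Nat.mod_lt _ (by omega)
    set j' := j % m with hj'_def
    clear_value j'
    match j', hj' with
    | 0, _ =>
      have : δ * 3 ^ 0 % n = δ := by simp [Nat.mod_eq_of_lt hδn]
      rw [this]; omega
    | 1, _ =>
      have h3δ : δ * 3 < n := by omega
      have : δ * 3 ^ 1 % n = δ * 3 := by rw [pow_one, Nat.mod_eq_of_lt h3δ]
      rw [this]; omega
    | (i + 2), hj2 =>
      set b : ℕ := 3 ^ i with hb_def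
      have hb1 : 1 ≤ b := Nat.one_le_pow _ _ (by norm_num)
      have hba : b ≤ a := by
        rw [hb_def, ha_def]
        exact Nat.pow_le_pow_right (by norm_num) (by omega)
      have h9b : (3:ℕ) ^ (i + 2) = 9 * b := by rw [pow_add, hb_def]; ring
      have hX : 4 * (δ * (9 * b)) + 2 * b = 7 * (b * n) := by
        have e1 : (4 * δ + 1) * (9 * b) = (7 * a) * (9 * b) := by rw [h4δ]
        have e2 : (7 * b) * (n + 1) = (7 * b) * (9 * a) := by rw [hn]
        ring_nf at e1 e2 ⊢
        linarith
      rcases Nat.even_or_odd i with ⟨c, hc⟩ | ⟨c, hc⟩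
      · -- i even, b ≡ 1 mod 4
        have hbmod : b % 4 = 1 := by
          have h9 : (9:ℕ) ^ c % 4 = 1 := by rw [Nat.pow_mod]; norm_num
          have : b = 9 ^ c := by rw [hb_def, hc, ← two_mul, pow_mul]; norm_num
          omega
        obtain ⟨r, hr⟩ : ∃ r, 3 * n = 4 * r + 2 * b := ⟨(3 * n - 2 * b) / 4, by omega⟩
        obtain ⟨q, hq⟩ : ∃ q, 7 * b = 4 * q + 3 := ⟨(7 * b - 3) / 4, by omega⟩
        have hXqr : δ * (9 * b) = q * n + r := by
          have e3 : 7 * (b * n) = 4 * (q * n) + 3 * n := by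
            calc 7 * (b * n) = (7 * b) * n := by ring
            _ = (4 * q + 3) * n := by rw [hq]
            _ = 4 * (q * n) + 3 * n := by ring
          linarith [hX, e3, hr]
        have hlt : r < n := by omega
        have hk : δ * 3 ^ (i + 2) % n = r := by
          rw [h9b, hXqr, add_comm, Nat.add_mul_mod_self_right, Nat.mod_eq_of_lt hlt]
        rw [hk]; omega
      · -- i odd, b ≡ 3 mod 4
        have hbmod : b % 4 = 3 := by
          have h9 : (9:ℕ) ^ c % 4 = 1 := by rw [Nat.pow_mod]; norm_num
          have : b = 3 * 9 ^ c := by rw [hb_def, hc, pow_succ, pow_mul]; ring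
          omega
        obtain ⟨r, hr⟩ : ∃ r, n = 4 * r + 2 * b := ⟨(n - 2 * b) / 4, by omega⟩
        obtain ⟨q, hq⟩ : ∃ q, 7 * b = 4 * q + 1 := ⟨(7 * b - 1) / 4, by omega⟩
        have hXqr : δ * (9 * b) = q * n + r := by
          have e3 : 7 * (b * n) = 4 * (q * n) + n := by
            calc 7 * (b * n) = (7 * b) * n := by ring
            _ = (4 * q + 1) * n := by rw [hq]
            _ = 4 * (q * n) + n := by ring
          linarith [hX, e3, hr]
        have hlt : r < n := by omega
        have hk : δ * 3 ^ (i + 2) % n = r := by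
          rw [h9b, hXqr, add_comm, Nat.add_mul_mod_self_right, Nat.mod_eq_of_lt hlt]
        rw [hk]; omega
  -- conclude
  unfold absCosetLeader cyclotomicCoset
  apply le_antisymm
  · refine Nat.sInf_le ⟨δ, ⟨0, ?_⟩, ?_⟩
    · simp [Nat.mod_eq_of_lt hδn]
    · omega
  · refine le_csInf ⟨min δ (n - δ), δ, ⟨0, by simp [Nat.mod_eq_of_lt hδn]⟩, rfl⟩ ?_
    rintro t ⟨k, ⟨j, rfl⟩, rfl⟩
    exact key j
end

section
/- Let m ≥ 2 be even, n = 3^m - 1, and δ₂ = (3^m - 1)/4. Then the 3-cyclotomic coset of δ₂ modulo n equals {δ₂, n - δ₂}, so it has exactly 2 elements. -/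
theorem stmt6 (m : ℕ) (hm : 2 ≤ m) (heven : Even m) :
    cyclotomicCoset (3 ^ m - 1) ((3 ^ m - 1) / 4) =
      {(3 ^ m - 1) / 4, (3 ^ m - 1) - (3 ^ m - 1) / 4} ∧
    (cyclotomicCoset (3 ^ m - 1) ((3 ^ m - 1) / 4)).ncard = 2 := by
  obtain ⟨k, hk⟩ := heven
  set n := 3 ^ m - 1 with hn
  set δ := n / 4 with hδ
  have h9m : 3 ^ m = 9 ^ k := by rw [hk, ← two_mul, pow_mul]; norm_num
  have h4 : (4:ℕ) ∣ n := by
    have h8 : (8:ℕ) ∣ 9 ^ k - 1 ^ k := by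
      have := Nat.sub_dvd_pow_sub_pow 9 1 k
      simpa using this
    have : (4:ℕ) ∣ 9 ^ k - 1 ^ k := dvd_trans (by norm_num) h8
    simpa [hn, h9m] using this
  have hn4 : n = 4 * δ := (Nat.mul_div_cancel' h4).symm
  have hnge : 8 ≤ n := by
    have : 3 ^ 2 ≤ 3 ^ m := Nat.pow_le_pow_right (by norm_num) hm
    omega
  have hδpos : 0 < δ := by omega
  have hsub : n - δ = 3 * δ := by omega
  have key : ∀ j, δ * 3 ^ j % n = δ ∨ δ * 3 ^ j % n = 3 * δ := by
    intro j
    induction j with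
    | zero => left; rw [pow_zero, mul_one, Nat.mod_eq_of_lt (by omega)]
    | succ j ih =>
      have hstep : δ * 3 ^ (j + 1) % n = (δ * 3 ^ j % n) * 3 % n := by
        rw [pow_succ, ← mul_assoc, Nat.mul_mod, Nat.mod_eq_of_lt (by omega : 3 < n)]
      rcases ih with h | h
      · right
        rw [hstep, h, Nat.mod_eq_of_lt (by omega), mul_comm]
      · left
        rw [hstep, h]
        have : 3 * δ * 3 = n + (n + δ) := by omega
        rw [this, Nat.add_mod_left, Nat.add_mod_left, Nat.mod_eq_of_lt (by omega)]
  constructor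
  · ext x
    simp only [cyclotomicCoset, Set.mem_setOf_eq, Set.mem_insert_iff, Set.mem_singleton_iff]
    constructor
    · rintro ⟨j, rfl⟩
      rcases key j with h | h
      · left; exact h
      · right; omega
    · rintro (rfl | rfl)
      · exact ⟨0, by simp [Nat.mod_eq_of_lt (by omega : δ < n)]⟩
      · exact ⟨1, by rw [hsub, pow_one, Nat.mod_eq_of_lt (by omega)]; ring⟩
  · have : cyclotomicCoset n δ = {δ, n - δ} := by
      ext x
      simp only [cyclotomicCoset, Set.mem_setOf_eq, Set.mem_insert_iff, Set.mem_singleton_iff]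
      constructor
      · rintro ⟨j, rfl⟩
        rcases key j with h | h
        · left; exact h
        · right; omega
      · rintro (rfl | rfl)
        · exact ⟨0, by simp [Nat.mod_eq_of_lt (by omega : δ < n)]⟩
        · exact ⟨1, by rw [hsub, pow_one, Nat.mod_eq_of_lt (by omega)]; ring⟩
    rw [this, Set.ncard_pair (by omega)]
end

section
/- Let m ≥ 2 be even, n = 3^m - 1, δ₁ = (3^m - 1)/2, and δ₂ = (3^m - 1)/4. Then δ₂ is the second largest absolute coset leader: for every s ∈ Z_n with C_s ∉ {C_{δ₁}, C_{δ₂}}, the absolute coset leader of C_s is strictly less than δ₂. -/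
lemma coset_eq_of_mem (m n s a j : ℕ) (hm : 1 ≤ m) (hn : 3 ^ m = n + 1)
    (ha : a = s * 3 ^ j % n) :
    cyclotomicCoset n a = cyclotomicCoset n s := by
  obtain ⟨m', rfl⟩ : ∃ m', m = m' + 1 := ⟨m - 1, by omega⟩
  have hmod : (3:ℕ) ^ (m' + 1) ≡ 1 [MOD n] := by
    show 3 ^ (m' + 1) % n = 1 % n
    rw [hn]; exact Nat.add_mod_left n 1
  ext x
  simp only [cyclotomicCoset, Set.mem_setOf_eq]
  constructor
  · rintro ⟨i, rfl⟩
    refine ⟨j + i, ?_⟩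
    rw [ha, Nat.mod_mul_mod, mul_assoc, ← pow_add]
  · rintro ⟨i, rfl⟩
    refine ⟨i + j * m', ?_⟩
    rw [ha, Nat.mod_mul_mod, mul_assoc, ← pow_add]
    have he : j + (i + j * m') = i + (m' + 1) * j := by ring
    rw [he, pow_add, pow_mul, ← mul_assoc]
    have h1 := (hmod.pow j).mul_left (s * 3 ^ i)
    rw [one_pow, mul_one] at h1
    exact h1.symm

theorem stmt7 (m : ℕ) (hm : 2 ≤ m) (heven : Even m) (s : ℕ) (hs : s < 3 ^ m - 1)
    (h1 : cyclotomicCoset (3 ^ m - 1) s ≠ cyclotomicCoset (3 ^ m - 1) ((3 ^ m - 1) / 2))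
    (h2 : cyclotomicCoset (3 ^ m - 1) s ≠ cyclotomicCoset (3 ^ m - 1) ((3 ^ m - 1) / 4)) :
    absCosetLeader (3 ^ m - 1) s < (3 ^ m - 1) / 4 := by
  have h9 : (9:ℕ) ≤ 3 ^ m := by
    calc (9:ℕ) = 3 ^ 2 := by norm_num
    _ ≤ 3 ^ m := Nat.pow_le_pow_right (by norm_num) hm
  set n := 3 ^ m - 1 with hndef
  have h3m : 3 ^ m = n + 1 := by omega
  obtain ⟨t, ht⟩ := heven
  -- 8 divides n
  have h9t : (3:ℕ) ^ m = 9 ^ t := by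
    rw [ht, show (9:ℕ) = 3 ^ 2 by norm_num, ← pow_mul]
    ring_nf
  have h8mod : (3:ℕ) ^ m % 8 = 1 := by
    rw [h9t, Nat.pow_mod]
    norm_num
  obtain ⟨r, hr⟩ : ∃ r, n = 8 * r := ⟨n / 8, by omega⟩
  have hrpos : 1 ≤ r := by omega
  have h3dvd : (3:ℕ) ∣ 3 ^ m := dvd_pow_self 3 (by omega)
  have h3n : ¬ (3 ∣ n) := by omega
  by_contra hcon
  push_neg at hcon
  -- every element of the coset has both itself and its complement ≥ n/4
  have hkey : ∀ j : ℕ, n / 4 ≤ min (s * 3 ^ j % n) (n - s * 3 ^ j % n) := by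
    intro j
    refine le_trans hcon (Nat.sInf_le ?_)
    exact ⟨s * 3 ^ j % n, ⟨j, rfl⟩, rfl⟩
  have hlt : ∀ j : ℕ, s * 3 ^ j % n < n := fun j => Nat.mod_lt _ (by omega)
  have hb : ∀ j : ℕ, 2 * r ≤ s * 3 ^ j % n ∧ s * 3 ^ j % n ≤ 6 * r := by
    intro j
    have h1 := hkey j
    have h2 := hlt j
    omega
  have hrec : ∀ j : ℕ, s * 3 ^ (j + 1) % n = (s * 3 ^ j % n) * 3 % n := by
    intro j
    conv_rhs => rw [Nat.mod_mul_mod]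
    rw [mul_assoc, ← pow_succ]
  have hne : ∀ j : ℕ, s * 3 ^ j % n ≠ 2 * r ∧ s * 3 ^ j % n ≠ 4 * r ∧ s * 3 ^ j % n ≠ 6 * r := by
    have key : ∀ j : ℕ, s * 3 ^ j % n ≠ 2 * r ∧ s * 3 ^ j % n ≠ 4 * r := by
      intro j
      constructor
      · intro h
        refine h2 ((coset_eq_of_mem m n s (n / 4) j (by omega) h3m ?_).symm)
        omega
      · intro h
        refine h1 ((coset_eq_of_mem m n s (n / 2) j (by omega) h3m ?_).symm)
        omega
    intro j
    refine ⟨(key j).1, (key j).2, ?_⟩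
    intro h
    have h6 : s * 3 ^ (j + 1) % n = 2 * r := by
      rw [hrec j, h, show 6 * r * 3 = 2 * r + 2 * n by omega,
        Nat.add_mul_mod_self_right, Nat.mod_eq_of_lt (by omega)]
    exact (key (j + 1)).1 h6
  have hmid : ∀ j : ℕ, 10 * r < 3 * (s * 3 ^ j % n) ∧ 3 * (s * 3 ^ j % n) < 14 * r := by
    intro j
    have hbj := hb j
    have hbj1 := hb (j + 1)
    have hnej := hne j
    have hnej1 := hne (j + 1)
    have hrj := hrec j
    have hltj := hlt j
    by_cases hc1 : (s * 3 ^ j % n) * 3 < n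
    · rw [Nat.mod_eq_of_lt hc1] at hrj
      omega
    · by_cases hc2 : (s * 3 ^ j % n) * 3 < 2 * n
      · have he : (s * 3 ^ j % n) * 3 % n = (s * 3 ^ j % n) * 3 - n := by
          rw [Nat.mod_eq_sub_mod (by omega), Nat.mod_eq_of_lt (by omega)]
        rw [he] at hrj
        omega
      · have he : (s * 3 ^ j % n) * 3 % n = (s * 3 ^ j % n) * 3 - 2 * n := by
          rw [Nat.mod_eq_sub_mod (by omega), Nat.mod_eq_sub_mod (by omega),
            Nat.mod_eq_of_lt (by omega)]
          omega
        rw [he] at hrj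
        omega
  have hstep : ∀ j : ℕ, s * 3 ^ (j + 1) % n = (s * 3 ^ j % n) * 3 - n ∧
      n ≤ (s * 3 ^ j % n) * 3 := by
    intro j
    have h := hmid j
    refine ⟨?_, by omega⟩
    rw [hrec j, Nat.mod_eq_sub_mod (by omega), Nat.mod_eq_of_lt (by omega)]
  have hgrow : ∀ j : ℕ, 12 * ((s * 3 ^ j % n : ℕ) : ℤ) - 6 * (n : ℤ) =
      3 ^ j * (12 * ((s * 3 ^ 0 % n : ℕ) : ℤ) - 6 * (n : ℤ)) := by
    intro j
    induction j with
    | zero => simp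
    | succ j ih =>
      have h1 := (hstep j).1
      have h2 := (hstep j).2
      have hcast : ((s * 3 ^ (j + 1) % n : ℕ) : ℤ) = 3 * ((s * 3 ^ j % n : ℕ) : ℤ) - (n : ℤ) := by
        rw [h1]
        push_cast [h2]
        ring
      rw [hcast, pow_succ]
      linear_combination 3 * ih
  have habs : ∀ j : ℕ, |12 * ((s * 3 ^ j % n : ℕ) : ℤ) - 6 * (n : ℤ)| < (n : ℤ) := by
    intro j
    have h := hmid j
    rw [abs_lt]
    constructor <;> omega
  have hzero : 12 * ((s * 3 ^ 0 % n : ℕ) : ℤ) - 6 * (n : ℤ) = 0 := by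
    by_contra hD
    have h1 : (1:ℤ) ≤ |12 * ((s * 3 ^ 0 % n : ℕ) : ℤ) - 6 * (n : ℤ)| := Int.one_le_abs hD
    have h2 := habs m
    rw [hgrow m, abs_mul, abs_pow] at h2
    have h3 : ((3:ℤ) ^ m) ≤ |(3:ℤ)| ^ m * |12 * ((s * 3 ^ 0 % n : ℕ) : ℤ) - 6 * (n : ℤ)| := by
      rw [abs_of_nonneg (by norm_num : (0:ℤ) ≤ 3)]
      nlinarith [pow_pos (by norm_num : (0:ℤ) < 3) m]
    have h4 : ((3:ℤ) ^ m) = (n : ℤ) + 1 := by exact_mod_cast h3m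
    linarith
  have h00 : s * 3 ^ 0 % n = s := by
    rw [pow_zero, mul_one, Nat.mod_eq_of_lt hs]
  rw [h00] at hzero
  have hs4 : s = 4 * r := by omega
  have := (hne 0).2.1
  rw [h00] at this
  omega
end

section
/- Let m ≡ 2 (mod 4), m ≥ 6, n = 3^m - 1, and δ₃ = (3^{m-6} - 1)/5 + 3^{m-6} + 2·3^{m-5} + 2·3^{m-3} + 3^{m-2}. Then the 3-cyclotomic coset C_{δ₃} modulo n has exactly m elements and C_{δ₃} ≠ C_{n-δ₃}. -/
private lemma auxA (X Y N : ℕ) (h1 : X ≤ Y) (h2 : 3 ≤ X) (h3 : N + 1 = 3 * Y)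
    (hd : N ∣ 2 * (X - 1)) : False := by
  have hlt : 2 * (X - 1) < N := by omega
  have h0 := Nat.eq_zero_of_dvd_of_lt hd hlt
  omega

private lemma auxB (X Y N : ℕ) (h1 : X ≤ Y) (hY : 243 ≤ Y) (h3 : N + 1 = 3 * Y)
    (hd : N ∣ 2 * (X + 1)) : False := by
  have hlt : 2 * (X + 1) < N := by omega
  have h0 := Nat.eq_zero_of_dvd_of_lt hd hlt
  omega

theorem stmt10 (m : ℕ) (hm : 6 ≤ m) (h4 : m % 4 = 2) :
    (cyclotomicCoset (3 ^ m - 1)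
      ((3 ^ (m - 6) - 1) / 5 + 3 ^ (m - 6) + 2 * 3 ^ (m - 5) + 2 * 3 ^ (m - 3) + 3 ^ (m - 2))).ncard
      = m ∧
    cyclotomicCoset (3 ^ m - 1)
      ((3 ^ (m - 6) - 1) / 5 + 3 ^ (m - 6) + 2 * 3 ^ (m - 5) + 2 * 3 ^ (m - 3) + 3 ^ (m - 2)) ≠
    cyclotomicCoset (3 ^ m - 1)
      ((3 ^ m - 1) -
        ((3 ^ (m - 6) - 1) / 5 + 3 ^ (m - 6) + 2 * 3 ^ (m - 5) + 2 * 3 ^ (m - 3) + 3 ^ (m - 2))) := by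
  obtain ⟨q, hq⟩ : 5 ∣ 3 ^ (m - 6) - 1 := by
    obtain ⟨k, hk⟩ : 4 ∣ m - 6 := by omega
    have h81 : (81:ℕ) ^ k ≡ 1 [MOD 5] := by
      simpa using Nat.ModEq.pow k (show (81:ℕ) ≡ 1 [MOD 5] by decide)
    have h2 : (3:ℕ) ^ (m-6) = 81 ^ k := by rw [hk, pow_mul]; norm_num
    rw [h2]
    have := (Nat.modEq_iff_dvd' (Nat.one_le_pow k 81 (by norm_num))).mp h81.symm
    simpa using this
  have hx : (3:ℕ) ^ (m - 6) = 5 * q + 1 := by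
    have h1 : 1 ≤ (3:ℕ)^(m-6) := Nat.one_le_pow _ _ (by norm_num)
    omega
  set D := (3 ^ (m - 6) - 1) / 5 + 3 ^ (m - 6) + 2 * 3 ^ (m - 5) + 2 * 3 ^ (m - 3) + 3 ^ (m - 2) with hDdef
  set N := 3 ^ m - 1 with hNdef
  have e5 : (3:ℕ) ^ (m-5) = 3^(m-6) * 3 := by
    rw [← pow_succ]; congr 1; omega
  have e3 : (3:ℕ) ^ (m-3) = 3^(m-6) * 27 := by
    rw [show (27:ℕ) = 3^3 by norm_num, ← pow_add]; congr 1; omega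
  have e2 : (3:ℕ) ^ (m-2) = 3^(m-6) * 81 := by
    rw [show (81:ℕ) = 3^4 by norm_num, ← pow_add]; congr 1; omega
  have em : (3:ℕ) ^ m = 3^(m-6) * 729 := by
    rw [show (729:ℕ) = 3^6 by norm_num, ← pow_add]; congr 1; omega
  have hD : D = 711 * q + 142 := by
    have hqdiv : (3 ^ (m - 6) - 1) / 5 = q := by rw [hq, Nat.mul_div_cancel_left _ (by norm_num)]
    rw [hDdef, hqdiv, e5, e3, e2, hx]; ring
  have hN : N = 3645 * q + 728 := by
    rw [hNdef, em, hx]; ring_nf; omega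
  have key : ∀ a : ℕ, N ∣ D * a → N ∣ 2 * a := by
    intro a ha
    have h1 : N ∣ 405 * (D * a) := ha.mul_left _
    have h2 : 405 * (D * a) + 2 * a = 79 * N * a := by
      have h79 : 405 * D + 2 = 79 * N := by omega
      calc 405*(D*a) + 2*a = (405*D+2)*a := by ring
        _ = 79*N*a := by rw [h79]
    have h3 : N ∣ 405 * (D * a) + 2 * a := h2 ▸ ⟨79*a, by ring⟩
    exact (Nat.dvd_add_right h1).mp h3
  have hm1 : (3:ℕ) ^ m = 3 * 3 ^ (m-1) := by
    rw [← pow_succ']; congr 1; omega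
  have hm1big : (243:ℕ) ≤ 3 ^ (m-1) := by
    calc (243:ℕ) = 3^5 := by norm_num
      _ ≤ 3^(m-1) := Nat.pow_le_pow_right (by norm_num) (by omega)
  have hNsucc : N + 1 = 3 * 3 ^ (m-1) := by
    have h1 : 1 ≤ (3:ℕ)^m := Nat.one_le_pow _ _ (by norm_num)
    rw [hNdef, Nat.sub_add_cancel h1, hm1]
  have lemA : ∀ t, 0 < t → t < m → ¬ N ∣ D * (3^t - 1) := by
    intro t ht htm hdvd
    have h2a := key _ hdvd
    have hb : (3:ℕ)^t ≤ 3^(m-1) := Nat.pow_le_pow_right (by norm_num) (by omega)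
    have h3t : (3:ℕ) ≤ 3^t := by
      calc (3:ℕ) = 3^1 := (pow_one 3).symm
        _ ≤ 3^t := Nat.pow_le_pow_right (by norm_num) ht
    exact auxA (3^t) (3^(m-1)) N hb h3t hNsucc h2a
  have lemB : ∀ t, t < m → ¬ N ∣ D * (3^t + 1) := by
    intro t htm hdvd
    have h2a := key _ hdvd
    have hb : (3:ℕ)^t ≤ 3^(m-1) := Nat.pow_le_pow_right (by norm_num) (by omega)
    exact auxB (3^t) (3^(m-1)) N hb hm1big hNsucc h2a
  have h3mN : (3:ℕ) ^ m ≡ 1 [MOD N] := by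
    show 3^m % N = 1 % N
    have h1 : 1 ≤ (3:ℕ)^m := Nat.one_le_pow _ _ (by norm_num)
    have h2 : (3:ℕ)^m = N + 1 := by omega
    rw [h2, Nat.add_mod_left]
  have hmod : ∀ j, D * 3^j % N = D * 3^(j % m) % N := by
    intro j
    have h1 : (3:ℕ)^j ≡ 3^(j % m) [MOD N] := by
      conv_lhs => rw [← Nat.div_add_mod j m]
      rw [pow_add, pow_mul]
      calc ((3:ℕ)^m)^(j/m) * 3^(j%m) ≡ 1^(j/m) * 3^(j%m) [MOD N] :=
            Nat.ModEq.mul (h3mN.pow _) (Nat.ModEq.refl _)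
        _ = 3^(j%m) := by rw [one_pow, one_mul]
    exact Nat.ModEq.mul_left D h1
  have hcop : ∀ i : ℕ, Nat.Coprime (3 ^ i) N := by
    have h3N : ¬ (3 ∣ N) := by
      have h1 : (3:ℕ) ∣ 3^m := dvd_pow_self 3 (by omega)
      have h2 : 1 ≤ (3:ℕ)^m := Nat.one_le_pow _ _ (by norm_num)
      omega
    intro i
    exact Nat.Coprime.pow_left i ((Nat.Prime.coprime_iff_not_dvd Nat.prime_three).mpr h3N)
  have hinj2 : ∀ i j, i ≤ j → j < m → D * 3^i % N = D * 3^j % N → i = j := by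
    intro i j hij hjm hfe
    by_contra hne
    have hlt : i < j := lt_of_le_of_ne hij hne
    have hjt : j = i + (j - i) := by omega
    set t := j - i with ht
    have h1 : (3:ℕ)^i * D ≡ 3^i * (D * 3^t) [MOD N] := by
      have e : D * 3 ^ j = 3^i * (D * 3^t) := by rw [hjt, pow_add]; ring
      have e2 : D * 3 ^ i = 3^i * D := mul_comm _ _
      show (3^i * D) % N = (3^i * (D*3^t)) % N
      rw [← e, ← e2]; exact hfe
    have h2 : D ≡ D * 3^t [MOD N] := Nat.ModEq.cancel_left_of_coprime ((hcop i).symm) h1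
    have h1t : 1 ≤ (3:ℕ)^t := Nat.one_le_pow _ _ (by norm_num)
    have h3 : N ∣ D * 3^t - D := (Nat.modEq_iff_dvd' (Nat.le_mul_of_pos_right D (by positivity))).mp h2
    have h4 : N ∣ D * (3^t - 1) := by
      have e : D * (3^t - 1) = D * 3^t - D := by
        rw [Nat.mul_sub, mul_one]
      rw [e]; exact h3
    exact lemA t (by omega) (by omega) h4
  constructor
  · have hSet : cyclotomicCoset N D = ↑((Finset.range m).image (fun j => D * 3^j % N)) := by
      ext k
      simp only [cyclotomicCoset, Set.mem_setOf_eq, Finset.coe_image, Set.mem_image,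
        Finset.mem_coe, Finset.mem_range]
      constructor
      · rintro ⟨j, rfl⟩
        exact ⟨j % m, Nat.mod_lt _ (by omega), (hmod j).symm⟩
      · rintro ⟨j, _, rfl⟩
        exact ⟨j, rfl⟩
    rw [hSet, Set.ncard_coe_finset, Finset.card_image_of_injOn, Finset.card_range]
    intro i hi j hj hfe
    simp only [Finset.coe_range, Set.mem_Iio] at hi hj
    rcases le_total i j with h | h
    · exact hinj2 i j h hj hfe
    · exact (hinj2 j i h hi hfe.symm).symm
  · intro heq
    have hDpos : 0 < D := by omega
    have hDN : D < N := by omega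
    have hmem : N - D ∈ cyclotomicCoset N D := by
      rw [heq]
      exact ⟨0, by rw [pow_zero, mul_one, Nat.mod_eq_of_lt (by omega)]⟩
    obtain ⟨j, hj⟩ := hmem
    rw [hmod j] at hj
    set r := j % m with hr
    have hrm : r < m := Nat.mod_lt _ (by omega)
    have h1 : D * 3^r ≡ N - D [MOD N] := by
      show D*3^r % N = (N-D) % N
      rw [show (N-D) % N = N - D from Nat.mod_eq_of_lt (by omega)]
      exact hj.symm
    have h2 : D * 3^r + D ≡ (N - D) + D [MOD N] := h1.add_right D
    have h3 : N ∣ D * 3^r + D := by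
      have e : (N - D) + D = N := by omega
      rw [e] at h2
      exact (Nat.modEq_zero_iff_dvd).mp (h2.trans (Nat.modEq_zero_iff_dvd.mpr dvd_rfl))
    have h4 : N ∣ D * (3^r + 1) := by rw [Nat.mul_add, mul_one]; exact h3
    exact lemB r hrm h4
end

section
/- Let m be odd and n = 3^m - 1. Then gcd((3^{m-1} - 1)/4 + 3^{m-2}, 3^m - 1) = 1. -/
theorem stmt11 (m : ℕ) (hm : 3 ≤ m) (hodd : Odd m) :
    Nat.gcd ((3 ^ (m - 1) - 1) / 4 + 3 ^ (m - 2)) (3 ^ m - 1) = 1 := by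
  obtain ⟨k, hk⟩ := hodd
  have hk1 : 1 ≤ k := by omega
  -- let s = 9^(k-1)
  set s : ℕ := 9 ^ (k - 1) with hs
  have hs1 : 1 ≤ s := Nat.one_le_pow _ _ (by norm_num)
  have hsodd : s % 2 = 1 := by
    have : (9:ℕ) ^ (k-1) % 2 = 1 % 2 := by
      rw [Nat.pow_mod]; norm_num
    simpa using this
  have h1 : 3 ^ (m - 1) = 9 * s := by
    have : m - 1 = 2 * (k - 1) + 2 := by omega
    rw [this, pow_add, pow_mul]
    norm_num [hs, mul_comm]
  have h2 : 3 ^ (m - 2) = 3 * s := by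
    have : m - 2 = 2 * (k - 1) + 1 := by omega
    rw [this, pow_add, pow_mul]
    norm_num [hs, mul_comm]
  have h3 : 3 ^ m = 27 * s := by
    have : m = 2 * (k - 1) + 3 := by omega
    rw [this, pow_add, pow_mul]
    norm_num [hs, mul_comm]
  -- 8 ∣ 9s - 1
  have h9 : (9:ℕ) * s % 8 = 1 := by
    have : (9:ℕ) * s % 8 = (9 % 8) * (9 ^ (k-1) % 8) % 8 := by
      rw [hs, Nat.mul_mod]
    rw [this, Nat.pow_mod]
    norm_num
  obtain ⟨t, ht1⟩ : ∃ t, 9 * s = 8 * t + 1 := ⟨(9 * s - 1) / 8, by omega⟩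
  have ha : (3 ^ (m - 1) - 1) / 4 + 3 ^ (m - 2) = 2 * t + 3 * s := by
    rw [h1, h2]
    omega
  have hn : 3 ^ m - 1 = 24 * t + 2 := by rw [h3]; omega
  rw [ha, hn]
  set d : ℕ := Nat.gcd (2 * t + 3 * s) (24 * t + 2) with hd
  have hda : d ∣ 2 * t + 3 * s := Nat.gcd_dvd_left _ _
  have hdn : d ∣ 24 * t + 2 := Nat.gcd_dvd_right _ _
  have h36 : d ∣ 36 * (2 * t + 3 * s) := Dvd.dvd.mul_left hda 36
  have h7 : d ∣ 7 * (24 * t + 2) := Dvd.dvd.mul_left hdn 7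
  have heq : 7 * (24 * t + 2) = 36 * (2 * t + 3 * s) + 2 := by
    omega
  have hd2 : d ∣ 2 := (Nat.dvd_add_right h36).mp (heq ▸ h7)
  rcases (Nat.dvd_prime Nat.prime_two).mp hd2 with h | h
  · exact h
  · exfalso
    obtain ⟨c, hc⟩ := hda
    rw [h] at hc
    omega
end

section
/- Let m ≡ 2 (mod 4) and m ≥ 6. Then gcd((3^m - 19)/5, 3^m - 1) = 2. -/
lemma pow81 (k : ℕ) (hk : 1 ≤ k) : ∃ t, 81 ^ k = 180 * t + 81 := by
  induction k with
  | zero => omega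
  | succ n ih =>
    rcases Nat.eq_or_lt_of_le hk with h | h
    · exact ⟨0, by rw [← h, pow_one]⟩
    · obtain ⟨t, ht⟩ := ih (by omega)
      exact ⟨81 * t + 36, by rw [pow_succ, ht]; ring⟩

theorem stmt12 (m : ℕ) (hm : 6 ≤ m) (h4 : m % 4 = 2) :
    Nat.gcd ((3 ^ m - 19) / 5) (3 ^ m - 1) = 2 := by
  obtain ⟨k, hk, rfl⟩ : ∃ k, 1 ≤ k ∧ m = 4 * k + 2 := ⟨m / 4, by omega, by omega⟩
  obtain ⟨t, ht⟩ := pow81 k hk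
  have h3 : 3 ^ (4 * k + 2) = 1620 * t + 729 := by
    have : (3:ℕ) ^ (4 * k + 2) = 81 ^ k * 9 := by
      rw [pow_add, pow_mul]; norm_num
    rw [this, ht]; ring
  rw [h3]
  have h1 : (1620 * t + 729 - 19) / 5 = 324 * t + 142 := by
    have : 1620 * t + 729 - 19 = 5 * (324 * t + 142) := by omega
    rw [this, Nat.mul_div_cancel_left _ (by norm_num)]
  have h2 : 1620 * t + 729 - 1 = 18 + 5 * (324 * t + 142) := by omega
  rw [h1, h2, Nat.gcd_add_mul_right_right]
  rw [Nat.gcd_comm, Nat.gcd_rec]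
  have : (324 * t + 142) % 18 = 16 := by omega
  rw [this]; rfl
end

section
/- Let m ≥ 4 with m ≡ 0 (mod 4), n = 3^m - 1. Consider the code C = {c(a,b) = (a(-1)^i + Tr_{F_9/F_3}(b ζ₄^i))_{i=0}^{n-1} : a ∈ F_3, b ∈ F_9}, where ζ₄ ∈ F_9 is a primitive 4th root of unity. Then C has exactly 27 codewords with weight distribution: 1 codeword of weight 0, 12 of weight (3^m-1)/2, 8 of weight (3/4)(3^m-1), and 6 of weight 3^m - 1. -/
/-!
Since `ζ₄ ^ 2 = -1`, the sequence `a (-1)^i + Tr (b ζ₄^i)` has period `4`, one period being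
`(a + u, -a + v, a - u, -a - v)` with `u = Tr b` and `v = Tr (b ζ₄)`. As `4 ∣ n`, the weight of
the codeword is `n / 4` times the number of nonzero entries of that period. Because `1, ζ₄` is an
`𝔽₃`-basis of `𝔽₉` and the trace form is nondegenerate, `b ↦ (u, v)` is a bijection
`𝔽₉ → 𝔽₃²`, so the weight distribution comes from counting the `27` triples `(a, u, v)`.
-/

open Finset Module

theorem Nat.count_mul_of_periodic {p : ℕ → Prop} [DecidablePred p] {k : ℕ}
    (hp : Function.Periodic p k) (q : ℕ) : Nat.count p (q * k) = q * Nat.count p k := by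
  induction q with
  | zero => simp
  | succ q ih =>
    have hshift : (fun j => p (q * k + j)) = p := funext fun j => by
      rw [add_comm]; exact hp.nat_mul q j
    rw [add_mul, one_mul, Nat.count_add, ih, add_mul, one_mul]
    congr 1
    simp_rw [hshift]

theorem exists_three_pow_sub_one_eq_mul_four {m : ℕ} (hm : m ≠ 0) (he : Even m) :
    ∃ q, 0 < q ∧ 3 ^ m - 1 = q * 4 := by
  obtain ⟨j, rfl⟩ := he
  have hmod : 3 ^ (j + j) % 4 = 1 := by
    rw [← two_mul, pow_mul, Nat.pow_mod]
    norm_num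
  have h9 : 3 ^ 2 ≤ 3 ^ (j + j) := Nat.pow_le_pow_right (by norm_num) (by omega)
  exact ⟨(3 ^ (j + j) - 1) / 4, by omega, by omega⟩

theorem sq_eq_neg_one_of_orderOf_eq_four {M : Type*} [CommRing M] [IsDomain M] {ζ : M}
    (hζ : orderOf ζ = 4) : ζ ^ 2 = -1 :=
  ((hζ ▸ IsPrimitiveRoot.orderOf ζ).pow_of_dvd two_ne_zero (by norm_num)).eq_neg_one_of_two_right

def periodWeight {R : Type*} [Ring R] [DecidableEq R] (a u v : R) : ℕ :=
  [a + u, -a + v, a - u, -a - v].countP (· ≠ 0)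

theorem ncard_support_eq_mul_periodWeight {K L : Type*} [Field K] [Field L] [Algebra K L]
    [DecidableEq K] {ζ : L} (hζ : ζ ^ 2 = -1) (a : K) (b : L) (q : ℕ) :
    {i : ℕ | i < q * 4 ∧ a * (-1) ^ i + Algebra.trace K L (b * ζ ^ i) ≠ 0}.ncard
      = q * periodWeight a (Algebra.trace K L b) (Algebra.trace K L (b * ζ)) := by
  set p : ℕ → Prop := fun i => a * (-1) ^ i + Algebra.trace K L (b * ζ ^ i) ≠ 0
  have hζ4 : ζ ^ 4 = 1 := by rw [show 4 = 2 * 2 by rfl, pow_mul, hζ]; norm_num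
  have hp : Function.Periodic p 4 := fun i => by
    simp only [p, pow_add, hζ4, mul_one]; norm_num
  have hset : {i : ℕ | i < q * 4 ∧ p i} = ↑{i ∈ range (q * 4) | p i} := by ext; simp
  rw [hset, Set.ncard_coe_finset, ← Nat.count_eq_card_filter_range, Nat.count_mul_of_periodic hp]
  congr 1
  have hζ3 : ζ ^ 3 = -ζ := by rw [pow_succ, hζ]; ring
  have hneg : (-1 : K) ^ 3 = -1 := by norm_num
  simp only [ne_eq, Nat.count_succ, Nat.count_zero, pow_zero, mul_one, ite_not, zero_add, pow_one,
    mul_neg, even_two, Even.neg_pow, one_pow, hζ, map_neg, hneg, hζ3, periodWeight, decide_not,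
    sub_eq_add_neg, List.countP_cons, List.countP_nil, Bool.not_eq_eq_eq_not, Bool.not_true,
    decide_eq_false_iff_not, p]
  ring

theorem periodWeight_distribution :
    {x : ZMod 3 × ZMod 3 × ZMod 3 | periodWeight x.1 x.2.1 x.2.2 = 0}.ncard = 1 ∧
    {x : ZMod 3 × ZMod 3 × ZMod 3 | periodWeight x.1 x.2.1 x.2.2 = 2}.ncard = 12 ∧
    {x : ZMod 3 × ZMod 3 × ZMod 3 | periodWeight x.1 x.2.1 x.2.2 = 3}.ncard = 8 ∧
    {x : ZMod 3 × ZMod 3 × ZMod 3 | periodWeight x.1 x.2.1 x.2.2 = 4}.ncard = 6 := by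
  simp only [Set.ncard_eq_toFinset_card', Set.toFinset_ofPred]
  decide

/-- `Tr b` and `Tr (b x)` are the coordinates of `b` in the trace-dual basis of `1, x`. -/
theorem bijective_trace_trace_mul {K L : Type*} [Field K] [Field L] [Algebra K L]
    [FiniteDimensional K L] [Algebra.IsSeparable K L] (hrank : finrank K L = 2) {x : L}
    (hx : x ∉ Set.range (algebraMap K L)) :
    Function.Bijective fun b : L => (Algebra.trace K L b, Algebra.trace K L (b * x)) := by
  have hli : LinearIndependent K ![1, x] :=
    (LinearIndependent.pair_iff' one_ne_zero).2 fun a ha =>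
      hx ⟨a, by rw [Algebra.algebraMap_eq_smul_one, ha]⟩
  let B := basisOfLinearIndependentOfCardEqFinrank hli (by simp [hrank])
  convert (finTwoArrowEquiv K).bijective.comp B.traceDual.equivFun.bijective using 1
  funext b
  simp [B, coe_basisOfLinearIndependentOfCardEqFinrank]

theorem finrank_zmod_three_of_card_eq_nine (F : Type*) [Field F] [Fintype F]
    [Algebra (ZMod 3) F] (hF : Fintype.card F = 9) : finrank (ZMod 3) F = 2 := by
  have hcard := Module.card_eq_pow_finrank (K := ZMod 3) (V := F)
  rw [hF, ZMod.card] at hcard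
  exact Nat.pow_right_injective (by norm_num) (hcard.symm.trans (by norm_num : 9 = 3 ^ 2))

theorem notMem_range_algebraMap_zmod_three_of_sq_eq_neg_one {F : Type*} [Field F]
    [Algebra (ZMod 3) F] {ζ : F} (hζ : ζ ^ 2 = -1) : ζ ∉ Set.range (algebraMap (ZMod 3) F) := by
  rintro ⟨x, rfl⟩
  have hx : x ^ 2 = -1 := (algebraMap (ZMod 3) F).injective (by simpa using hζ)
  exact (by decide : ∀ y : ZMod 3, y ^ 2 ≠ -1) x hx

theorem stmt17 (m : ℕ) (hm : 4 ≤ m) (h4 : m % 4 = 0)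
    (F : Type*) [Field F] [Fintype F] [Algebra (ZMod 3) F]
    (hF : Fintype.card F = 9)
    (ζ₄ : F) (hζ : orderOf ζ₄ = 4) :
    let n := 3 ^ m - 1
    let w : ZMod 3 → F → ℕ := fun a b =>
      {i : ℕ | i < n ∧
        a * (-1) ^ i + Algebra.trace (ZMod 3) F (b * ζ₄ ^ i) ≠ 0}.ncard
    {ab : ZMod 3 × F | w ab.1 ab.2 = 0}.ncard = 1 ∧
    {ab : ZMod 3 × F | w ab.1 ab.2 = (3 ^ m - 1) / 2}.ncard = 12 ∧
    {ab : ZMod 3 × F | w ab.1 ab.2 = 3 * (3 ^ m - 1) / 4}.ncard = 8 ∧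
    {ab : ZMod 3 × F | w ab.1 ab.2 = 3 ^ m - 1}.ncard = 6 := by
  intro n w
  obtain ⟨q, hq, hn⟩ :=
    exists_three_pow_sub_one_eq_mul_four (m := m) (by omega) (Nat.even_iff.2 (by omega))
  have hζ2 := sq_eq_neg_one_of_orderOf_eq_four hζ
  set T : F → ZMod 3 × ZMod 3 := fun b => (Algebra.trace _ _ b, Algebra.trace _ _ (b * ζ₄))
  have hT : Function.Bijective (Prod.map (id : ZMod 3 → ZMod 3) T) :=
    Function.bijective_id.prodMap <| bijective_trace_trace_mul
      (finrank_zmod_three_of_card_eq_nine F hF)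
      (notMem_range_algebraMap_zmod_three_of_sq_eq_neg_one hζ2)
  have hw : ∀ a b, w a b = q * periodWeight a (T b).1 (T b).2 := fun a b => by
    simp only [w, n, hn]
    exact ncard_support_eq_mul_periodWeight hζ2 a b q
  have hcount : ∀ t k, t = q * k → {ab : ZMod 3 × F | w ab.1 ab.2 = t}.ncard
      = {x : ZMod 3 × ZMod 3 × ZMod 3 | periodWeight x.1 x.2.1 x.2.2 = k}.ncard := by
    rintro t k rfl
    have hpre : {ab : ZMod 3 × F | w ab.1 ab.2 = q * k}
        = Prod.map id T ⁻¹' {x | periodWeight x.1 x.2.1 x.2.2 = k} := by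
      ext; simp [hw, hq.ne']
    rw [hpre, Set.ncard_preimage_of_injective_subset_range hT.injective
      (by simp [hT.surjective.range_eq])]
  rw [hcount _ 0 (by omega), hcount _ 2 (by omega), hcount _ 3 (by omega), hcount _ 4 (by omega)]
  exact periodWeight_distribution
end
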